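/- arXiv:1005.1884 — 3 statements merged into one kernel-verified Lean document; each statement's English description precedes it below -/
import Mathlib

section
/- For integers d ≥ 0 and 0 ≤ s ≤ d+1, define F(d,t,s) = Σ_{j=s}^{d+1} (-1)^j C(j,s) C(d+1,j) j^{d-t}. Then for every t with s ≤ t ≤ d, F(d,t,s) = 0. -/
/-!
Multiplied by `s!`, the summand becomes `(-1)^j C(d+1,j) P(j)` for
`P = X (X - 1) ⋯ (X - s + 1) · X^(d-t)`, since `X (X - 1) ⋯ (X - s + 1)` takes the value
`s! C(j,s)` at `j`; both vanish for `j < s`, so the sum may run over `0 ≤ j ≤ d + 1`. It is then,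
up to sign, the `(d+1)`-st forward difference of `P` at `0`, which is zero because
`deg P = s + d - t ≤ d`.
-/

open Finset Polynomial

theorem Polynomial.sum_range_neg_one_pow_mul_choose_mul_eval_eq_zero {R : Type*} [CommRing R]
    {P : R[X]} {n : ℕ} (hP : P.natDegree < n) :
    ∑ k ∈ range (n + 1), (-1 : R) ^ k * n.choose k * P.eval (k : R) = 0 := by
  have hdiff := congr_fun (fwdDiff_iter_eq_zero_of_degree_lt hP) 0
  rw [fwdDiff_iter_eq_sum_shift, Pi.zero_apply] at hdiff
  have hsign : ∀ k ≤ n, (-1 : R) ^ k = (-1) ^ n * (-1) ^ (n - k) := fun k hk ↦ by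
    rw [← pow_add, show n + (n - k) = k + 2 * (n - k) by omega, pow_add, pow_mul, neg_one_sq,
      one_pow, mul_one]
  calc ∑ k ∈ range (n + 1), (-1 : R) ^ k * n.choose k * P.eval (k : R)
      = (-1) ^ n * ∑ k ∈ range (n + 1),
          ((-1 : ℤ) ^ (n - k) * n.choose k) • P.eval (0 + k • 1) := by
        rw [mul_sum]
        refine sum_congr rfl fun k hk ↦ ?_
        rw [hsign k (Nat.lt_succ_iff.mp (mem_range.mp hk))]
        simp only [zsmul_eq_mul, nsmul_one, zero_add]
        push_cast
        ring
    _ = 0 := by rw [hdiff, mul_zero]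

theorem Polynomial.natDegree_descPochhammer_mul_X_pow {R : Type*} [Ring R] [IsDomain R]
    (s m : ℕ) : (descPochhammer R s * X ^ m).natDegree = s + m := by
  rw [(monic_descPochhammer R s).natDegree_mul (monic_X_pow m), descPochhammer_natDegree,
    natDegree_X_pow]

theorem Polynomial.eval_descPochhammer_mul_X_pow {R : Type*} [CommRing R] (s m j : ℕ) :
    (descPochhammer R s * X ^ m).eval (j : R) = s.factorial * j.choose s * (j : R) ^ m := by
  rw [eval_mul, eval_pow, eval_X, descPochhammer_eval_eq_descFactorial,
    Nat.descFactorial_eq_factorial_mul_choose, Nat.cast_mul]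

theorem F_vanishes_general (d t s : ℕ) (hst : s ≤ t) (htd : t ≤ d) :
    ∑ j ∈ Finset.Icc s (d + 1),
      (-1 : ℤ) ^ j * (j.choose s : ℤ) * ((d + 1).choose j : ℤ) * (j : ℤ) ^ (d - t) = 0 := by
  have hdeg : (descPochhammer ℤ s * X ^ (d - t)).natDegree < d + 1 := by
    rw [natDegree_descPochhammer_mul_X_pow]
    omega
  have hsum_range : ∑ j ∈ Icc s (d + 1),
      (-1 : ℤ) ^ j * (j.choose s : ℤ) * ((d + 1).choose j : ℤ) * (j : ℤ) ^ (d - t) =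
      ∑ j ∈ range (d + 2),
      (-1 : ℤ) ^ j * (j.choose s : ℤ) * ((d + 1).choose j : ℤ) * (j : ℤ) ^ (d - t) := by
    refine sum_subset (fun j hj ↦ by simp only [mem_Icc, mem_range] at *; omega) fun j hj hj' ↦ ?_
    have hjs : j < s := by simp only [mem_Icc, mem_range] at hj hj'; omega
    rw [Nat.choose_eq_zero_of_lt hjs, Nat.cast_zero, mul_zero, zero_mul, zero_mul]
  have hfact : (s.factorial : ℤ) ≠ 0 := by exact_mod_cast s.factorial_ne_zero
  rw [hsum_range, ← mul_right_inj' hfact, mul_zero,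
    ← sum_range_neg_one_pow_mul_choose_mul_eval_eq_zero hdeg, mul_sum]
  refine sum_congr rfl fun j _ ↦ ?_
  rw [eval_descPochhammer_mul_X_pow]
  ring

/-- `F(d,t,s) = Σ_{j=s}^{d+1} (-1)^j C(j,s) C(d+1,j) j^{d-t}` vanishes for `s ≤ t ≤ d`. -/
theorem F_vanishes (d t s : ℕ) (hs : s ≤ d + 1) (hst : s ≤ t) (htd : t ≤ d) :
    ∑ j ∈ Finset.Icc s (d + 1),
      (-1 : ℤ) ^ j * (j.choose s : ℤ) * ((d + 1).choose j : ℤ) * (j : ℤ) ^ (d - t) = 0 :=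
  F_vanishes_general d t s hst htd
end

section
/- For integers d ≥ 0 and 1 ≤ s ≤ d+1, define F(d,t,s) = Σ_{j=s}^{d+1} (-1)^j C(j,s) C(d+1,j) j^{d-t}. Then F(d, s-1, s) = (-1)^{d+1} (d+1-s)! · C(d+1, s). -/
/-! Substituting `j = s + i` and using `C(d+1, j) C(j, s) = C(d+1, s) C(m, i)` with `m = d + 1 - s`
(note `d - (s - 1) = m`), the sum becomes `± C(d+1, s) Σᵢ (-1)ⁱ C(m, i) (s + i)ᵐ`, the `m`-th forward
difference of `x ↦ xᵐ`, which is the constant `m!`. -/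

open Finset

theorem sum_range_neg_one_pow_mul_choose_mul_add_pow {R : Type*} [CommRing R] (m : ℕ) (x : R) :
    ∑ i ∈ range (m + 1), (-1 : R) ^ i * m.choose i * (x + i) ^ m =
      (-1) ^ m * m.factorial := by
  have h := fwdDiff_iter_eq_sum_shift (1 : R) (fun y ↦ y ^ m) m x
  rw [fwdDiff_iter_eq_factorial] at h
  simp only [zsmul_eq_mul, nsmul_eq_mul, mul_one, Int.cast_mul, Int.cast_pow, Int.cast_neg,
    Int.cast_one, Int.cast_natCast, Pi.natCast_apply] at h
  rw [h, mul_sum]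
  refine sum_congr rfl fun i hi ↦ ?_
  have hsign : (-1 : R) ^ m = (-1) ^ i * (-1) ^ (m - i) := by
    rw [← pow_add, Nat.add_sub_cancel' (mem_range_succ_iff.mp hi)]
  have hsq : (-1 : R) ^ (m - i) * (-1) ^ (m - i) = 1 := by
    rw [← mul_pow, neg_one_mul, neg_neg, one_pow]
  rw [hsign]
  linear_combination -(-1 : R) ^ i * m.choose i * (x + i) ^ m * hsq

/-- `F(d,s-1,s) = (-1)^{d+1} (d+1-s)! C(d+1,s)` for `1 ≤ s ≤ d+1`. -/
theorem F_at_t_eq_s_sub_one (d s : ℕ) (hs1 : 1 ≤ s) (hs : s ≤ d + 1) :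
    ∑ j ∈ Finset.Icc s (d + 1),
      (-1 : ℤ) ^ j * (j.choose s : ℤ) * ((d + 1).choose j : ℤ) * (j : ℤ) ^ (d - (s - 1)) =
      (-1 : ℤ) ^ (d + 1) * ((d + 1 - s).factorial : ℤ) * ((d + 1).choose s : ℤ) := by
  set m := d + 1 - s
  have hterm (i : ℕ) : (-1 : ℤ) ^ (s + i) * ((s + i).choose s : ℤ) *
      ((d + 1).choose (s + i) : ℤ) * ((s + i : ℕ) : ℤ) ^ m =
      (-1) ^ s * (d + 1).choose s * ((-1) ^ i * m.choose i * ((s : ℤ) + i) ^ m) := by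
    have hchoose :
        ((d + 1).choose (s + i) * (s + i).choose s : ℤ) = (d + 1).choose s * m.choose i := by
      have := Nat.choose_mul (n := d + 1) (Nat.le_add_right s i)
      rw [Nat.add_sub_cancel_left] at this
      exact_mod_cast this
    push_cast
    linear_combination (-1 : ℤ) ^ (s + i) * ((s : ℤ) + i) ^ m * hchoose
  rw [show d - (s - 1) = m by omega, ← Ico_add_one_right_eq_Icc, sum_Ico_eq_sum_range,
    show d + 1 + 1 - s = m + 1 by omega, sum_congr rfl fun i _ ↦ hterm i, ← mul_sum,
    sum_range_neg_one_pow_mul_choose_mul_add_pow, show d + 1 = s + m by omega, pow_add]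
  ring
end

section
/- Let H be a function analytic at y = 0 with Taylor expansion H(y) = h_m y^m + h_{m+1} y^{m+1} + ..., i.e., vanishing to order at least m at 0. Define the operator L on such functions by (LG)(y) = G(y/(1+y)) - G(y). Then for every n ∈ ℕ, Lⁿ H is analytic at 0 and vanishes to order at least m+n at 0. -/
/-!
Write `y / (1 + y) = y * u y` with `u y = (1 + y)⁻¹`, so `u 0 = 1`. If `G y = y ^ n • g y` near
`0`, then `G (y * u y) - G y = y ^ n • (u y ^ n • g (y * u y) - g y)`, and the bracket is analytic
and vanishes at `0`. Hence `L` raises the order of vanishing at `0` by at least one, and an order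
of at least `m` is the same as the vanishing of the first `m` derivatives.
-/

/-- The operator `L` acting on functions by `(L G)(y) = G (y/(1+y)) - G y`. -/
noncomputable def Lop (G : ℂ → ℂ) : ℂ → ℂ := fun y => G (y / (1 + y)) - G y

open Filter Topology

section TangentToIdentity

variable {𝕜 E : Type*} [NontriviallyNormedField 𝕜] [NormedAddCommGroup E] [NormedSpace 𝕜 E]
  {f : 𝕜 → E} {u : 𝕜 → 𝕜}

theorem AnalyticAt.comp_mul_sub (hf : AnalyticAt 𝕜 f 0) (hu : AnalyticAt 𝕜 u 0) :
    AnalyticAt 𝕜 (fun z => f (z * u z) - f z) 0 :=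
  (hf.comp_of_eq (analyticAt_id.mul hu) (zero_mul _)).sub hf

theorem natCast_add_one_le_analyticOrderAt_comp_mul_sub {n : ℕ} (hf : AnalyticAt 𝕜 f 0)
    (hu : AnalyticAt 𝕜 u 0) (hu0 : u 0 = 1) (hn : n ≤ analyticOrderAt f 0) :
    ((n + 1 : ℕ) : ℕ∞) ≤ analyticOrderAt (fun z => f (z * u z) - f z) 0 := by
  obtain ⟨g, hg, hfg⟩ := (natCast_le_analyticOrderAt hf).1 hn
  have hφ : AnalyticAt 𝕜 (fun z => z * u z) 0 := by fun_prop
  have hφ_tendsto : Tendsto (fun z => z * u z) (𝓝 0) (𝓝 0) := by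
    simpa using hφ.continuousAt.tendsto
  set k : 𝕜 → E := fun z => u z ^ n • g (z * u z) - g z
  have hk : AnalyticAt 𝕜 k 0 :=
    ((hu.pow n).smul (hg.comp_of_eq hφ (zero_mul _))).sub hg
  have hk0 : k 0 = 0 := by simp [k, hu0]
  obtain ⟨k', hk', hkk'⟩ := (natCast_le_analyticOrderAt (n := 1) hk).1 <|
    Order.one_le_iff_ne_zero.2 (analyticOrderAt_ne_zero.2 ⟨hk, hk0⟩)
  refine (natCast_le_analyticOrderAt (hf.comp_mul_sub hu)).2 ⟨k', hk', ?_⟩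
  filter_upwards [hφ_tendsto.eventually hfg, hfg, hkk'] with z hfφz hfz hkz
  simp only [sub_zero, pow_one] at hfφz hfz hkz ⊢
  rw [hfφz, hfz, pow_succ, mul_smul, ← hkz, mul_pow, mul_smul, smul_sub]

end TangentToIdentity

theorem Lop_eq_comp_mul_sub (G : ℂ → ℂ) : Lop G = fun y => G (y * (1 + y)⁻¹) - G y :=
  rfl

theorem AnalyticAt.Lop {G : ℂ → ℂ} (hG : AnalyticAt ℂ G 0) : AnalyticAt ℂ (Lop G) 0 := by
  rw [Lop_eq_comp_mul_sub]
  exact hG.comp_mul_sub (analyticAt_inv_one_add ℂ)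

theorem natCast_add_one_le_analyticOrderAt_Lop {G : ℂ → ℂ} {n : ℕ} (hG : AnalyticAt ℂ G 0)
    (hn : n ≤ analyticOrderAt G 0) : ((n + 1 : ℕ) : ℕ∞) ≤ analyticOrderAt (Lop G) 0 := by
  rw [Lop_eq_comp_mul_sub]
  exact natCast_add_one_le_analyticOrderAt_comp_mul_sub hG (analyticAt_inv_one_add ℂ) (by simp) hn

/-- If `H` is analytic at `0` and vanishes there to order at least `m`, then `Lⁿ H`
is analytic at `0` and vanishes there to order at least `m + n`. -/
theorem Lop_iterate_increases_vanishing_order (H : ℂ → ℂ) (m : ℕ)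
    (hH : AnalyticAt ℂ H 0) (hvan : ∀ i < m, iteratedDeriv i H 0 = 0) :
    ∀ n : ℕ, AnalyticAt ℂ (Lop^[n] H) 0 ∧
      ∀ i < m + n, iteratedDeriv i (Lop^[n] H) 0 = 0 := by
  have order : ∀ n : ℕ, AnalyticAt ℂ (Lop^[n] H) 0 ∧
      ((m + n : ℕ) : ℕ∞) ≤ analyticOrderAt (Lop^[n] H) 0 := by
    intro n
    induction n with
    | zero => exact ⟨hH, (natCast_le_analyticOrderAt_iff_iteratedDeriv_eq_zero hH).2 hvan⟩
    | succ n ih =>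
      rw [Function.iterate_succ_apply']
      exact ⟨ih.1.Lop, natCast_add_one_le_analyticOrderAt_Lop ih.1 ih.2⟩
  intro n
  obtain ⟨han, hle⟩ := order n
  exact ⟨han, (natCast_le_analyticOrderAt_iff_iteratedDeriv_eq_zero han).1 hle⟩
end
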